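/- Let 0≤n≤N be integers and f∈Ker L_n. Then ⟨R_{N−1}R_{N−2}⋯R_n f, R_{N−1}R_{N−2}⋯R_n f⟩_{V_{h,N}} = q^{−(N−n)(N+n+1)/2}(q;q)_{N−n}(A_h q^{2n+h};q)_{N−n} · ⟨f,f⟩_{V_{h,n}}. Moreover, if either 0<α_i<q^{−1} for all i, or α_i>q^{−N} for all i, then the linear map Ker L_n → V_{h,N}, f ↦ R_{N−1}R_{N−2}⋯R_n f, is injective. -/

import Mathlib

/-!
`R_N` is, up to sign, the adjoint of `L_{N+1}` for `⟨·,·⟩`, and on `V_{h,m}` the commutator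
`L_{m+1} R_m - R_{m-1} L_m` is the scalar `c_m = (1 - q)(A_h q^{m+h-1} - q^{-m-1})`. Hence for
`f ∈ Ker L_n` we get `L R^k f = λ_k R^{k-1} f` with `λ_k = c_n + ⋯ + c_{n+k-1}`, so
`⟨R^k f, R^k f⟩ = -λ_k ⟨R^{k-1} f, R^{k-1} f⟩`, and `-λ_k` factors as
`q^{-(n+k)} (1 - q^k) (1 - A_h q^{2n+h+k-1})`.

For injectivity, the weights of `⟨·,·⟩_{V_{h,n}}` are all positive when `α_i < q⁻¹` and all of
sign `(-1)^n` when `α_i > q^{-N}`, so `⟨f,f⟩ = 0` forces `f = 0` as soon as the constant in the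
norm formula is nonzero.
-/

open Finset

noncomputable section

/-- q-shifted factorial `(a;q)_m`. -/
def qPoch (q a : ℝ) (m : ℕ) : ℝ := ∏ k ∈ Finset.range m, (1 - a * q ^ k)

/-- Partial sum `X_k = x_1 + ⋯ + x_k` (entries of index `< k`, 0-indexed). -/
def Xlt {h : ℕ} (x : Fin h → ℕ) (k : ℕ) : ℕ := ∑ j : Fin h, if (j : ℕ) < k then x j else 0

/-- Partial product `A_k = α_1 ⋯ α_k` (entries of index `< k`, 0-indexed). -/
def Apar {h : ℕ} (α : Fin h → ℝ) (k : ℕ) : ℝ := ∏ j : Fin h, if (j : ℕ) < k then α j else 1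

/-- Raising operator `R_N : V_{h,N} → V_{h,N+1}`. -/
def Rop (q : ℝ) {h : ℕ} (N : ℕ) (f : (Fin h → ℕ) → ℂ) : (Fin h → ℕ) → ℂ := fun x =>
  ∑ i : Fin h, (q : ℂ) ^ ((Xlt x i : ℤ) - N - 1) * (1 - (q : ℂ) ^ (x i)) *
    f (Function.update x i (x i - 1))

/-- Lowering operator `L_N : V_{h,N} → V_{h,N-1}` (its defining formula does not involve `N`). -/
def Lop (q : ℝ) {h : ℕ} (α : Fin h → ℝ) (f : (Fin h → ℕ) → ℂ) : (Fin h → ℕ) → ℂ := fun x =>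
  ∑ j : Fin h, ((Apar α j : ℝ) : ℂ) * (q : ℂ) ^ ((j : ℕ) + Xlt x j) *
    ((α j : ℂ) * (q : ℂ) ^ (x j + 1) - 1) * f (Function.update x j (x j + 1))

/-- The multidimensional q-Hahn operator `D_N : V_{h,N} → V_{h,N}`. -/
def Dop (q : ℝ) {h : ℕ} (α : Fin h → ℝ) (N : ℕ) (f : (Fin h → ℕ) → ℂ) : (Fin h → ℕ) → ℂ :=
  fun x =>
    (∑ i : Fin h, ∑ j : Fin h,
      if i ≠ j then
        ((Apar α j : ℝ) : ℂ) *
          (q : ℂ) ^ ((((j : ℕ) + Xlt x j + Xlt x i : ℕ) : ℤ) - N -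
            (if (i : ℕ) < (j : ℕ) then 1 else 0)) *
          ((α j : ℂ) * (q : ℂ) ^ (x j + 1) - 1) * (1 - (q : ℂ) ^ (x i)) *
          f (Function.update (Function.update x j (x j + 1)) i (x i - 1))
      else 0)
    + ((∑ j : Fin h,
          ((Apar α j : ℝ) : ℂ) * (q : ℂ) ^ ((((j : ℕ) + 2 * Xlt x j : ℕ) : ℤ) - N) *
            ((α j : ℂ) * (q : ℂ) ^ (x j) - 1) * (1 - (q : ℂ) ^ (x j)))
        + (((Apar α h : ℝ) : ℂ) * (q : ℂ) ^ (((h + N : ℕ) : ℤ) - 1) - 1) *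
            (1 - (q : ℂ) ^ (-(N : ℤ)))) * f x

/-- Scalar product on `V_{h,N}`. -/
def innerV (q : ℝ) {h : ℕ} (α : Fin h → ℝ) (N : ℕ) (f g : (Fin h → ℕ) → ℂ) : ℂ :=
  (q : ℂ) ^ (N * (N + 1) / 2) *
    ∑ x ∈ Finset.Nat.antidiagonalTuple h N,
      (∏ i : Fin h, ((qPoch q (q * α i) (x i) / qPoch q q (x i) : ℝ) : ℂ) *
        ((α i * q : ℝ) : ℂ) ^ ((N : ℤ) - Xlt x ((i : ℕ) + 1))) *
      f x * (starRingEnd ℂ) (g x)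

/-- `RopIter q n k f = R_{n+k-1} ⋯ R_{n+1} R_n f`. -/
def RopIter (q : ℝ) {h : ℕ} (n : ℕ) : ℕ → ((Fin h → ℕ) → ℂ) → ((Fin h → ℕ) → ℂ)
  | 0, f => f
  | k + 1, f => Rop q (n + k) (RopIter q n k f)

section Tuples

variable {h : ℕ}

lemma Xlt_update (x : Fin h → ℕ) (i : Fin h) (v k : ℕ) :
    Xlt (Function.update x i v) k + (if (i : ℕ) < k then x i else 0)
      = Xlt x k + (if (i : ℕ) < k then v else 0) := by
  have hupd : (fun j : Fin h => if (j : ℕ) < k then Function.update x i v j else 0)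
      = Function.update (fun j : Fin h => if (j : ℕ) < k then x j else 0) i
          (if (i : ℕ) < k then v else 0) := by
    funext j
    rcases eq_or_ne j i with rfl | hj
    · simp
    · simp [Function.update_of_ne hj]
  unfold Xlt
  rw [hupd, sum_update_of_mem (mem_univ i),
    sum_eq_sum_sdiff_singleton_add (mem_univ i) (fun j : Fin h => if (j : ℕ) < k then x j else 0)]
  ring

lemma Xlt_update_succ (x : Fin h → ℕ) (i : Fin h) (k : ℕ) :
    Xlt (Function.update x i (x i + 1)) k = Xlt x k + if (i : ℕ) < k then 1 else 0 := by
  have := Xlt_update x i (x i + 1) k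
  split_ifs at this ⊢ <;> omega

lemma Xlt_update_pred (x : Fin h → ℕ) (i : Fin h) (k : ℕ) (hx : x i ≠ 0) :
    Xlt (Function.update x i (x i - 1)) k + (if (i : ℕ) < k then 1 else 0) = Xlt x k := by
  have := Xlt_update x i (x i - 1) k
  split_ifs at this ⊢ <;> omega

lemma Xlt_zero (x : Fin h → ℕ) : Xlt x 0 = 0 := by simp [Xlt]

lemma Xlt_succ (x : Fin h → ℕ) (i : Fin h) : Xlt x ((i : ℕ) + 1) = Xlt x i + x i := by
  have hsplit : ∀ j : Fin h, (if (j : ℕ) < (i : ℕ) + 1 then x j else 0)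
      = (if (j : ℕ) < (i : ℕ) then x j else 0) + (if j = i then x j else 0) := by
    intro j
    rcases eq_or_ne j i with rfl | hj
    · simp
    · have : (j : ℕ) ≠ i := Fin.val_ne_of_ne hj
      split_ifs <;> omega
  unfold Xlt
  rw [sum_congr rfl fun j _ => hsplit j, sum_add_distrib, sum_ite_eq' univ i x,
    if_pos (mem_univ i)]

lemma Xlt_of_le (x : Fin h → ℕ) {k : ℕ} (hk : h ≤ k) : Xlt x k = ∑ j, x j :=
  sum_congr rfl fun j _ => if_pos (j.isLt.trans_le hk)

lemma Apar_zero (α : Fin h → ℝ) : Apar α 0 = 1 := by simp [Apar]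

lemma Apar_succ (α : Fin h → ℝ) (i : Fin h) : Apar α ((i : ℕ) + 1) = Apar α i * α i := by
  have hsplit : ∀ j : Fin h, (if (j : ℕ) < (i : ℕ) + 1 then α j else 1)
      = (if (j : ℕ) < (i : ℕ) then α j else 1) * (if j = i then α j else 1) := by
    intro j
    rcases eq_or_ne j i with rfl | hj
    · simp
    · have : (j : ℕ) ≠ i := Fin.val_ne_of_ne hj
      rw [if_neg hj, mul_one]
      exact if_congr (by omega) rfl rfl
  unfold Apar
  rw [prod_congr rfl fun j _ => hsplit j, prod_mul_distrib, prod_ite_eq' univ i α,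
    if_pos (mem_univ i)]

lemma Apar_of_le (α : Fin h → ℝ) {k : ℕ} (hk : h ≤ k) : Apar α k = ∏ j, α j :=
  prod_congr rfl fun j _ => if_pos (j.isLt.trans_le hk)

lemma prod_ite_lt_eq_Apar_mul_pow (α : Fin h → ℝ) (q : ℝ) (i : Fin h) :
    ∏ k : Fin h, (if (k : ℕ) < i then α k * q else 1) = Apar α i * q ^ (i : ℕ) := by
  have hcard : #{k : Fin h | (k : ℕ) < i} = i := by
    rw [show ({k : Fin h | (k : ℕ) < i} : Finset (Fin h)) = Iio i by ext; simp,
      Fin.card_Iio]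
  rw [Apar, ← prod_filter, ← prod_filter, prod_mul_distrib, prod_const, hcard]

lemma sum_update_succ (x : Fin h → ℕ) (i : Fin h) :
    ∑ j, Function.update x i (x i + 1) j = (∑ j, x j) + 1 := by
  rw [sum_update_of_mem (mem_univ i), sum_eq_sum_sdiff_singleton_add (mem_univ i) x]
  ring

lemma sum_update_pred (x : Fin h → ℕ) (i : Fin h) (hx : x i ≠ 0) :
    (∑ j, Function.update x i (x i - 1) j) + 1 = ∑ j, x j := by
  rw [sum_update_of_mem (mem_univ i), sum_eq_sum_sdiff_singleton_add (mem_univ i) x]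
  omega

lemma sum_antidiagonalTuple_succ {M : Type*} [AddCommMonoid M] (i : Fin h) (N : ℕ)
    (F : (Fin h → ℕ) → M) (hF : ∀ x, x i = 0 → F x = 0) :
    ∑ x ∈ Nat.antidiagonalTuple h (N + 1), F x
      = ∑ y ∈ Nat.antidiagonalTuple h N, F (Function.update y i (y i + 1)) := by
  rw [← sum_filter_of_ne (p := fun x : Fin h → ℕ => x i ≠ 0) fun x _ hne h0 => hne (hF x h0)]
  refine (sum_nbij' (fun y => Function.update y i (y i + 1))
    (fun x => Function.update x i (x i - 1)) ?_ ?_ ?_ ?_ fun _ _ => rfl).symm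
  · intro y hy
    rw [mem_filter, Nat.mem_antidiagonalTuple, sum_update_succ, Nat.mem_antidiagonalTuple.mp hy]
    simp
  · intro x hx
    rw [mem_filter, Nat.mem_antidiagonalTuple] at hx
    rw [Nat.mem_antidiagonalTuple]
    have := sum_update_pred x i hx.2
    omega
  · intro y _
    simp
  · intro x hx
    simp [Nat.sub_add_cancel (Nat.one_le_iff_ne_zero.mpr (mem_filter.mp hx).2)]

end Tuples

section qPochhammer

variable {q : ℝ}

lemma qPoch_succ (a : ℝ) (m : ℕ) : qPoch q a (m + 1) = qPoch q a m * (1 - a * q ^ m) :=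
  prod_range_succ _ _

lemma qPoch_pos {a : ℝ} {m : ℕ} (ha : ∀ j < m, a * q ^ j < 1) : 0 < qPoch q a m :=
  prod_pos fun j hj => sub_pos.mpr (ha j (mem_range.mp hj))

lemma neg_one_pow_mul_qPoch_pos {a : ℝ} {m : ℕ} (ha : ∀ j < m, 1 < a * q ^ j) :
    0 < (-1) ^ m * qPoch q a m := by
  induction m with
  | zero => simp [qPoch]
  | succ m ih =>
    have hpos := ih fun j hj => ha j (by omega)
    have hm := ha m (by omega)
    rw [qPoch_succ, show (-1 : ℝ) ^ (m + 1) * (qPoch q a m * (1 - a * q ^ m))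
      = (-1) ^ m * qPoch q a m * (a * q ^ m - 1) by ring]
    exact mul_pos hpos (by linarith)

lemma qPoch_self_pos (hq0 : 0 < q) (hq1 : q < 1) (m : ℕ) : 0 < qPoch q q m :=
  qPoch_pos fun j _ => by
    calc q * q ^ j ≤ q * 1 := by gcongr; exact pow_le_one₀ hq0.le hq1.le
      _ < 1 := by linarith

end qPochhammer

section Weight

variable {h : ℕ} {q : ℝ} {α : Fin h → ℝ}

def weightFactor (q : ℝ) (α : Fin h → ℝ) (N : ℕ) (x : Fin h → ℕ) (i : Fin h) : ℝ :=
  qPoch q (q * α i) (x i) / qPoch q q (x i) * (α i * q) ^ ((N : ℤ) - Xlt x ((i : ℕ) + 1))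

def weight (q : ℝ) (α : Fin h → ℝ) (N : ℕ) (x : Fin h → ℕ) : ℝ :=
  q ^ (N * (N + 1) / 2) * ∏ i, weightFactor q α N x i

lemma innerV_eq_sum_weight (N : ℕ) (f g : (Fin h → ℕ) → ℂ) :
    innerV q α N f g = ∑ x ∈ Nat.antidiagonalTuple h N,
      (weight q α N x : ℂ) * f x * starRingEnd ℂ (g x) := by
  simp only [innerV, weight, weightFactor, mul_sum]
  push_cast
  exact sum_congr rfl fun x _ => by ring

lemma weightFactor_update_succ_of_ne (N : ℕ) (y : Fin h → ℕ) {i k : Fin h} (hki : k ≠ i)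
    (hαq : α k * q ≠ 0) :
    weightFactor q α (N + 1) (Function.update y i (y i + 1)) k
      = weightFactor q α N y k * if (k : ℕ) < i then α k * q else 1 := by
  have hik : (k : ℕ) ≠ i := Fin.val_ne_of_ne hki
  unfold weightFactor
  rw [Function.update_of_ne hki, Xlt_update_succ]
  by_cases hlt : (k : ℕ) < i
  · rw [if_pos hlt, if_neg (by omega), show ((N + 1 : ℕ) : ℤ) - ((Xlt y ((k : ℕ) + 1) + 0 : ℕ) : ℤ)
      = (N - Xlt y ((k : ℕ) + 1) : ℤ) + 1 by push_cast; ring, zpow_add_one₀ hαq]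
    ring
  · rw [if_neg hlt, if_pos (by omega), mul_one, show ((N + 1 : ℕ) : ℤ)
      - ((Xlt y ((k : ℕ) + 1) + 1 : ℕ) : ℤ) = N - Xlt y ((k : ℕ) + 1) by push_cast; ring]

lemma weightFactor_update_succ_self (hq0 : 0 < q) (hq1 : q < 1) (N : ℕ) (y : Fin h → ℕ)
    (i : Fin h) :
    weightFactor q α (N + 1) (Function.update y i (y i + 1)) i * (1 - q ^ (y i + 1))
      = weightFactor q α N y i * (1 - α i * q ^ (y i + 1)) := by
  have hpos := qPoch_self_pos hq0 hq1 (y i)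
  have hfac : 1 - q * q ^ y i ≠ 0 := by
    have := qPoch_self_pos hq0 hq1 (y i + 1)
    rw [qPoch_succ] at this
    exact (pos_of_mul_pos_right this hpos.le).ne'
  unfold weightFactor
  rw [Function.update_self, Xlt_update_succ, if_pos (by omega), qPoch_succ, qPoch_succ,
    show ((N + 1 : ℕ) : ℤ) - ((Xlt y ((i : ℕ) + 1) + 1 : ℕ) : ℤ) = N - Xlt y ((i : ℕ) + 1) by
      push_cast; ring]
  field_simp
  ring

lemma weight_update_succ (hq0 : 0 < q) (hq1 : q < 1) (hα : ∀ i, 0 < α i) (N : ℕ)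
    (y : Fin h → ℕ) (i : Fin h) :
    weight q α (N + 1) (Function.update y i (y i + 1)) * (1 - q ^ (y i + 1))
      = q ^ (N + 1) * (Apar α i * q ^ (i : ℕ)) * weight q α N y * (1 - α i * q ^ (y i + 1)) := by
  have hrest : ∏ k ∈ univ.erase i, weightFactor q α (N + 1) (Function.update y i (y i + 1)) k
      = (∏ k ∈ univ.erase i, weightFactor q α N y k) * (Apar α i * q ^ (i : ℕ)) := by
    rw [prod_congr rfl fun k hk => weightFactor_update_succ_of_ne N y (ne_of_mem_erase hk)
      (mul_pos (hα k) hq0).ne', prod_mul_distrib,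
      prod_erase _ (f := fun k : Fin h => if (k : ℕ) < i then α k * q else 1)
        (if_neg (lt_irrefl _)),
      prod_ite_lt_eq_Apar_mul_pow]
  have htri : (N + 1) * (N + 1 + 1) / 2 = N * (N + 1) / 2 + (N + 1) := by
    rw [show (N + 1) * (N + 1 + 1) = N * (N + 1) + 2 * (N + 1) by ring,
      Nat.add_mul_div_left _ _ two_pos]
  unfold weight
  rw [← mul_prod_erase _ _ (mem_univ i), ← mul_prod_erase univ (weightFactor q α N y)
    (mem_univ i), hrest, htri, pow_add]
  linear_combination q ^ (N * (N + 1) / 2) * q ^ (N + 1) * (Apar α i * q ^ (i : ℕ))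
    * (∏ k ∈ univ.erase i, weightFactor q α N y k)
    * weightFactor_update_succ_self (α := α) hq0 hq1 N y i

lemma innerV_Rop (hq0 : 0 < q) (hq1 : q < 1) (hα : ∀ i, 0 < α i) (N : ℕ)
    (f g : (Fin h → ℕ) → ℂ) :
    innerV q α (N + 1) (Rop q N f) g = -innerV q α N f (Lop q α g) := by
  have hQ : (q : ℂ) ≠ 0 := Complex.ofReal_ne_zero.mpr hq0.ne'
  have hshift : ∀ (i : Fin h) (y : Fin h → ℕ),
      let y' := Function.update y i (y i + 1)
      (weight q α (N + 1) y' : ℂ) * ((q : ℂ) ^ ((Xlt y' i : ℤ) - N - 1) * (1 - (q : ℂ) ^ (y' i))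
        * f (Function.update y' i (y' i - 1))) * starRingEnd ℂ (g y')
      = -((weight q α N y : ℂ) * f y * ((Apar α i : ℂ) * (q : ℂ) ^ ((i : ℕ) + Xlt y i)
        * ((α i : ℂ) * (q : ℂ) ^ (y i + 1) - 1) * starRingEnd ℂ (g y'))) := by
    intro i y y'
    have hw := congrArg (fun r : ℝ => (r : ℂ)) (weight_update_succ hq0 hq1 hα N y i)
    have hzpow : (q : ℂ) ^ ((Xlt y i : ℤ) - N - 1) = (q : ℂ) ^ Xlt y i * ((q : ℂ) ^ (N + 1))⁻¹ := by
      rw [← zpow_natCast, ← zpow_natCast, ← zpow_neg, ← zpow_add₀ hQ]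
      push_cast; ring_nf
    have hinv : (q : ℂ) ^ (N + 1) * ((q : ℂ) ^ (N + 1))⁻¹ = 1 := mul_inv_cancel₀ (pow_ne_zero _ hQ)
    simp only [y', Function.update_self, Function.update_idem, Nat.add_sub_cancel,
      Function.update_eq_self, Xlt_update_succ, lt_irrefl, if_false, add_zero, hzpow] at hw ⊢
    push_cast at hw
    linear_combination ((q : ℂ) ^ Xlt y i * ((q : ℂ) ^ (N + 1))⁻¹ * f y
      * starRingEnd ℂ (g (Function.update y i (y i + 1)))) * hw
      + (weight q α N y * Apar α i * q ^ (i : ℕ) * (1 - α i * q ^ (y i + 1)) * q ^ Xlt y i * f y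
      * starRingEnd ℂ (g (Function.update y i (y i + 1))) : ℂ) * hinv
  rw [innerV_eq_sum_weight, innerV_eq_sum_weight]
  simp only [Rop, Lop, mul_sum, sum_mul, map_sum]
  rw [sum_comm, sum_comm (s := Nat.antidiagonalTuple h N), ← sum_neg_distrib]
  refine sum_congr rfl fun i _ => ?_
  rw [sum_antidiagonalTuple_succ i N _ fun x hx => by simp [hx], ← sum_neg_distrib]
  refine sum_congr rfl fun y _ => ?_
  rw [hshift i y]
  simp [Complex.conj_ofReal]

end Weight

section Commutator

variable {h : ℕ} {q : ℝ} {α : Fin h → ℝ}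

def lowerRaiseTerm (q : ℝ) (α : Fin h → ℝ) (m : ℕ) (f : (Fin h → ℕ) → ℂ) (x : Fin h → ℕ)
    (j i : Fin h) : ℂ :=
  let x' := Function.update x j (x j + 1)
  (Apar α j : ℂ) * (q : ℂ) ^ ((j : ℕ) + Xlt x j) * ((α j : ℂ) * (q : ℂ) ^ (x j + 1) - 1) *
    ((q : ℂ) ^ ((Xlt x' i : ℤ) - m - 1) * (1 - (q : ℂ) ^ (x' i)) *
      f (Function.update x' i (x' i - 1)))

def raiseLowerTerm (q : ℝ) (α : Fin h → ℝ) (m : ℕ) (f : (Fin h → ℕ) → ℂ) (x : Fin h → ℕ)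
    (i j : Fin h) : ℂ :=
  let x' := Function.update x i (x i - 1)
  (q : ℂ) ^ ((Xlt x i : ℤ) - (m - 1 : ℕ) - 1) * (1 - (q : ℂ) ^ (x i)) *
    ((Apar α j : ℂ) * (q : ℂ) ^ ((j : ℕ) + Xlt x' j) * ((α j : ℂ) * (q : ℂ) ^ (x' j + 1) - 1) *
      f (Function.update x' j (x' j + 1)))

lemma Lop_Rop_eq_sum (m : ℕ) (f : (Fin h → ℕ) → ℂ) (x : Fin h → ℕ) :
    Lop q α (Rop q m f) x = ∑ j, ∑ i, lowerRaiseTerm q α m f x j i := by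
  simp only [Lop, Rop, mul_sum, lowerRaiseTerm]

lemma Rop_Lop_eq_sum (m : ℕ) (f : (Fin h → ℕ) → ℂ) (x : Fin h → ℕ) :
    Rop q (m - 1) (Lop q α f) x = ∑ i, ∑ j, raiseLowerTerm q α m f x i j := by
  simp only [Rop, Lop, mul_sum, raiseLowerTerm]

lemma lowerRaiseTerm_of_ne (hq0 : 0 < q) (m : ℕ) (f : (Fin h → ℕ) → ℂ) {x : Fin h → ℕ}
    (hx : ∑ i, x i = m) {i j : Fin h} (hij : i ≠ j) :
    lowerRaiseTerm q α m f x j i = raiseLowerTerm q α m f x i j := by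
  have hQ : (q : ℂ) ≠ 0 := Complex.ofReal_ne_zero.mpr hq0.ne'
  by_cases hxi : x i = 0
  · simp [lowerRaiseTerm, raiseLowerTerm, Function.update_of_ne hij, hxi]
  have hm : x i ≤ m := hx ▸ single_le_sum (fun _ _ => Nat.zero_le _) (mem_univ i)
  have e1 := Xlt_update_succ x j i
  have e2 := Xlt_update_pred x i j hxi
  have hexp : (((j : ℕ) + Xlt x j : ℕ) : ℤ) + ((Xlt (Function.update x j (x j + 1)) i : ℤ) - m - 1)
      = (((j : ℕ) + Xlt (Function.update x i (x i - 1)) j : ℕ) : ℤ)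
        + ((Xlt x i : ℤ) - (m - 1 : ℕ) - 1) := by
    have : (i : ℕ) ≠ j := Fin.val_ne_of_ne hij
    split_ifs at e1 e2 <;> omega
  simp only [lowerRaiseTerm, raiseLowerTerm, Function.update_of_ne hij,
    Function.update_of_ne hij.symm]
  rw [Function.update_comm hij, ← zpow_natCast, ← zpow_natCast (q : ℂ) ((j : ℕ) + _)]
  calc _ = (q : ℂ) ^ ((((j : ℕ) + Xlt x j : ℕ) : ℤ)
          + ((Xlt (Function.update x j (x j + 1)) i : ℤ) - m - 1))
        * ((Apar α j : ℂ) * ((α j : ℂ) * (q : ℂ) ^ (x j + 1) - 1) * (1 - (q : ℂ) ^ (x i))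
          * f (Function.update (Function.update x j (x j + 1)) i (x i - 1))) := by
        rw [zpow_add₀ hQ]; ring
    _ = _ := by rw [hexp, zpow_add₀ hQ]; ring

/-- The correction term telescopes when summed over `j`. -/
lemma lowerRaiseTerm_self (hq0 : 0 < q) (m : ℕ) (f : (Fin h → ℕ) → ℂ) {x : Fin h → ℕ}
    (hx : ∑ i, x i = m) (j : Fin h) :
    lowerRaiseTerm q α m f x j j = raiseLowerTerm q α m f x j j + (1 - q) *
      ((Apar α ((j : ℕ) + 1) : ℂ)
          * (q : ℂ) ^ (2 * (Xlt x ((j : ℕ) + 1) : ℤ) + ((j : ℕ) + 1 : ℕ) - 1 - m)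
        - (Apar α j : ℂ) * (q : ℂ) ^ (2 * (Xlt x j : ℤ) + (j : ℕ) - 1 - m)) * f x := by
  have hQ : (q : ℂ) ≠ 0 := Complex.ofReal_ne_zero.mpr hq0.ne'
  set E : ℂ := (q : ℂ) ^ ((((j : ℕ) + 2 * Xlt x j : ℕ) : ℤ) - m - 1) with hE
  have hX : Xlt (Function.update x j (x j + 1)) j = Xlt x j := by
    simpa using Xlt_update_succ x j j
  have hRL : raiseLowerTerm q α m f x j j
      = E * q * (1 - (q : ℂ) ^ x j) * (Apar α j * ((α j : ℂ) * (q : ℂ) ^ x j - 1) * f x) := by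
    by_cases hxj : x j = 0
    · simp [raiseLowerTerm, hxj]
    have hm : 1 ≤ m := hx ▸ (Nat.one_le_iff_ne_zero.mpr hxj).trans
      (single_le_sum (fun _ _ => Nat.zero_le _) (mem_univ j))
    have hX' : Xlt (Function.update x j (x j - 1)) j = Xlt x j := by
      simpa using Xlt_update x j (x j - 1) j
    have hqE : (q : ℂ) ^ ((Xlt x j : ℤ) - (m - 1 : ℕ) - 1) * (q : ℂ) ^ ((j : ℕ) + Xlt x j)
        = E * q := by
      rw [hE, ← zpow_natCast, ← zpow_add₀ hQ, ← zpow_add_one₀ hQ]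
      congr 1
      push_cast
      omega
    simp only [raiseLowerTerm, Function.update_self, Function.update_idem, hX',
      Nat.sub_add_cancel (Nat.one_le_iff_ne_zero.mpr hxj), Function.update_eq_self]
    rw [← hqE]
    ring
  have hLR : lowerRaiseTerm q α m f x j j
      = E * (Apar α j * ((α j : ℂ) * (q : ℂ) ^ (x j + 1) - 1) * (1 - (q : ℂ) ^ (x j + 1))
        * f x) := by
    have hqE : (q : ℂ) ^ ((j : ℕ) + Xlt x j) * (q : ℂ) ^ ((Xlt x j : ℤ) - m - 1) = E := by
      rw [hE, ← zpow_natCast, ← zpow_add₀ hQ]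
      congr 1
      push_cast
      ring
    simp only [lowerRaiseTerm, Function.update_self, Function.update_idem, hX,
      Nat.add_sub_cancel, Function.update_eq_self]
    rw [← hqE]
    ring
  have hg1 : (q : ℂ) ^ (2 * (Xlt x ((j : ℕ) + 1) : ℤ) + ((j : ℕ) + 1 : ℕ) - 1 - m)
      = E * (q : ℂ) ^ (2 * x j + 1) := by
    rw [hE, Xlt_succ, ← zpow_natCast (q : ℂ) (2 * x j + 1), ← zpow_add₀ hQ]
    congr 1
    push_cast
    ring
  have hg0 : (q : ℂ) ^ (2 * (Xlt x j : ℤ) + (j : ℕ) - 1 - m) = E := by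
    rw [hE]
    congr 1
    push_cast
    ring
  rw [hRL, hLR, hg1, hg0, Apar_succ]
  push_cast
  ring

def commConst (q : ℝ) (α : Fin h → ℝ) (m : ℕ) : ℝ :=
  (1 - q) * (Apar α h * q ^ ((m : ℤ) + h - 1) - q ^ (-(m : ℤ) - 1))

lemma Lop_Rop (hq0 : 0 < q) (m : ℕ) (f : (Fin h → ℕ) → ℂ) {x : Fin h → ℕ}
    (hx : ∑ i, x i = m) :
    Lop q α (Rop q m f) x = Rop q (m - 1) (Lop q α f) x + commConst q α m * f x := by
  set g : ℕ → ℂ := fun k => (Apar α k : ℂ) * (q : ℂ) ^ (2 * (Xlt x k : ℤ) + k - 1 - m)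
  have hdiag : Lop q α (Rop q m f) x - Rop q (m - 1) (Lop q α f) x
      = ∑ j : Fin h, (1 - q) * (g ((j : ℕ) + 1) - g j) * f x := by
    rw [Lop_Rop_eq_sum, Rop_Lop_eq_sum, sum_comm (f := raiseLowerTerm q α m f x), ← sum_sub_distrib]
    refine sum_congr rfl fun j _ => ?_
    rw [← sum_sub_distrib, sum_eq_single_of_mem j (mem_univ j) fun i _ hij => by
      rw [lowerRaiseTerm_of_ne hq0 m f hx hij, sub_self], lowerRaiseTerm_self hq0 m f hx j]
    simp only [g]
    push_cast
    ring
  have htele : ∑ j : Fin h, (g ((j : ℕ) + 1) - g j) = g h - g 0 := by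
    rw [Fin.sum_univ_eq_sum_range (fun k => g (k + 1) - g k), sum_range_sub]
  rw [← sub_eq_iff_eq_add', hdiag, ← sum_mul, ← mul_sum, htele]
  simp only [g, commConst, Xlt_of_le x le_rfl, hx, Xlt_zero, Apar_zero]
  push_cast
  ring_nf

end Commutator

section NormFormula

variable {h : ℕ} {q : ℝ} {α : Fin h → ℝ}

lemma Rop_congr (m : ℕ) {f g : (Fin h → ℕ) → ℂ} {x : Fin h → ℕ}
    (hfg : ∀ y : Fin h → ℕ, (∑ i, y i) + 1 = ∑ i, x i → f y = g y) :
    Rop q m f x = Rop q m g x := by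
  refine sum_congr rfl fun i _ => ?_
  by_cases hxi : x i = 0
  · simp [hxi]
  · rw [hfg _ (sum_update_pred x i hxi)]

lemma Rop_const_mul (m : ℕ) (c : ℂ) (f : (Fin h → ℕ) → ℂ) (x : Fin h → ℕ) :
    Rop q m (fun y => c * f y) x = c * Rop q m f x := by
  simp only [Rop, mul_sum]
  exact sum_congr rfl fun _ _ => by ring

def lowerRaiseCoeff (q : ℝ) (α : Fin h → ℝ) (n k : ℕ) : ℝ :=
  ∑ j ∈ range k, commConst q α (n + j)

lemma lowerRaiseCoeff_zero (n : ℕ) : lowerRaiseCoeff q α n 0 = 0 := sum_range_zero _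

lemma lowerRaiseCoeff_succ (n k : ℕ) :
    lowerRaiseCoeff q α n (k + 1) = lowerRaiseCoeff q α n k + commConst q α (n + k) :=
  sum_range_succ _ _

lemma Lop_RopIter (hq0 : 0 < q) {n : ℕ} {f : (Fin h → ℕ) → ℂ}
    (hker : ∀ x : Fin h → ℕ, (∑ i, x i) + 1 = n → Lop q α f x = 0) (k : ℕ) {x : Fin h → ℕ}
    (hx : ∑ i, x i = n + k) :
    Lop q α (RopIter q n (k + 1) f) x = lowerRaiseCoeff q α n (k + 1) * RopIter q n k f x := by
  induction k generalizing x with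
  | zero =>
    have hLf : Rop q (n - 1) (Lop q α f) x = Rop q (n - 1) 0 x :=
      Rop_congr _ fun y hy => hker y (hy.trans hx)
    rw [show RopIter q n (0 + 1) f = Rop q n f from rfl, Lop_Rop hq0 n f hx, hLf,
      lowerRaiseCoeff_succ, lowerRaiseCoeff_zero]
    simp [Rop, RopIter]
  | succ k ih =>
    have hLR : Rop q (n + k) (Lop q α (RopIter q n (k + 1) f)) x
        = lowerRaiseCoeff q α n (k + 1) * RopIter q n (k + 1) f x := by
      rw [Rop_congr (g := fun y => lowerRaiseCoeff q α n (k + 1) * RopIter q n k f y) _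
        fun y hy => ih (by omega), Rop_const_mul, RopIter]
    rw [RopIter, Lop_Rop hq0 _ _ hx, show n + (k + 1) - 1 = n + k by omega, hLR,
      lowerRaiseCoeff_succ n (k + 1)]
    push_cast
    ring

lemma neg_lowerRaiseCoeff_succ (hq0 : 0 < q) (n k : ℕ) :
    -lowerRaiseCoeff q α n (k + 1)
      = (q ^ (n + k + 1))⁻¹ * (1 - q ^ (k + 1)) * (1 - Apar α h * q ^ (2 * n + h) * q ^ k) := by
  have hq : q ≠ 0 := hq0.ne'
  have hc : ∀ m : ℕ, commConst q α m
      = (1 - q) * (Apar α h * q ^ (m + h) * q⁻¹ - (q ^ (m + 1))⁻¹) := by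
    intro m
    rw [commConst, show (m : ℤ) + h - 1 = ((m + h : ℕ) : ℤ) + (-1) by push_cast; ring,
      show -(m : ℤ) - 1 = -((m + 1 : ℕ) : ℤ) by push_cast; ring, zpow_add₀ hq, zpow_neg,
      zpow_natCast, zpow_neg, zpow_natCast, zpow_one]
    ring
  induction k with
  | zero =>
    rw [lowerRaiseCoeff_succ, lowerRaiseCoeff_zero, hc]
    field_simp
    ring
  | succ k ih =>
    rw [lowerRaiseCoeff_succ n (k + 1), neg_add, ih, hc]
    field_simp
    ring

lemma innerV_RopIter_self (hq0 : 0 < q) (hq1 : q < 1) (hα : ∀ i, 0 < α i) {n : ℕ}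
    {f : (Fin h → ℕ) → ℂ} (hker : ∀ x : Fin h → ℕ, (∑ i, x i) + 1 = n → Lop q α f x = 0)
    (k : ℕ) :
    innerV q α (n + k) (RopIter q n k f) (RopIter q n k f)
      = ((∏ j ∈ range k, -lowerRaiseCoeff q α n (j + 1) : ℝ) : ℂ) * innerV q α n f f := by
  induction k with
  | zero => simp [RopIter]
  | succ k ih =>
    have hL : innerV q α (n + k) (RopIter q n k f) (Lop q α (RopIter q n (k + 1) f))
        = lowerRaiseCoeff q α n (k + 1)
          * innerV q α (n + k) (RopIter q n k f) (RopIter q n k f) := by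
      simp only [innerV_eq_sum_weight, mul_sum]
      refine sum_congr rfl fun x hx => ?_
      rw [Lop_RopIter hq0 hker k (Nat.mem_antidiagonalTuple.mp hx), map_mul,
        Complex.conj_ofReal]
      ring
    rw [show n + (k + 1) = n + k + 1 by ring, RopIter, innerV_Rop hq0 hq1 hα, ← RopIter, hL, ih,
      prod_range_succ]
    push_cast
    ring

lemma prod_neg_lowerRaiseCoeff (hq0 : 0 < q) (n k : ℕ) :
    ∏ j ∈ range k, -lowerRaiseCoeff q α n (j + 1)
      = q ^ (-((k * (2 * n + k + 1) / 2 : ℕ) : ℤ)) * qPoch q q k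
        * qPoch q (Apar α h * q ^ (2 * n + h)) k := by
  induction k with
  | zero => simp [qPoch]
  | succ k ih =>
    have htri : (k + 1) * (2 * n + (k + 1) + 1) / 2 = k * (2 * n + k + 1) / 2 + (n + k + 1) := by
      rw [show (k + 1) * (2 * n + (k + 1) + 1) = k * (2 * n + k + 1) + 2 * (n + k + 1) by ring,
        Nat.add_mul_div_left _ _ two_pos]
    rw [prod_range_succ, ih, neg_lowerRaiseCoeff_succ hq0, qPoch_succ, qPoch_succ, htri,
      Nat.cast_add, neg_add, zpow_add₀ hq0.ne', zpow_neg, zpow_neg, zpow_natCast, zpow_natCast]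
    ring

end NormFormula

section Injectivity

variable {h : ℕ} {q : ℝ} {α : Fin h → ℝ}

lemma innerV_self_eq_sum_normSq (N : ℕ) (f : (Fin h → ℕ) → ℂ) :
    innerV q α N f f
      = ((∑ x ∈ Nat.antidiagonalTuple h N, weight q α N x * Complex.normSq (f x) : ℝ) : ℂ) := by
  rw [innerV_eq_sum_weight]
  push_cast
  exact sum_congr rfl fun x _ => by rw [mul_assoc, Complex.mul_conj]

lemma eq_zero_of_innerV_self_eq_zero {N : ℕ} {f : (Fin h → ℕ) → ℂ} {s : ℝ}
    (hs : ∀ x ∈ Nat.antidiagonalTuple h N, 0 < s * weight q α N x)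
    (hf : innerV q α N f f = 0) {x : Fin h → ℕ} (hx : ∑ i, x i = N) : f x = 0 := by
  rw [innerV_self_eq_sum_normSq, Complex.ofReal_eq_zero] at hf
  have hsum : ∑ y ∈ Nat.antidiagonalTuple h N, s * weight q α N y * Complex.normSq (f y) = 0 := by
    simp_rw [mul_assoc]
    rw [← mul_sum, hf, mul_zero]
  have hmem := Nat.mem_antidiagonalTuple.mpr hx
  have hterm := (sum_eq_zero_iff_of_nonneg fun y hy =>
    mul_nonneg (hs y hy).le (Complex.normSq_nonneg _)).mp hsum x hmem
  exact Complex.normSq_eq_zero.mp ((mul_eq_zero.mp hterm).resolve_left (hs x hmem).ne')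

lemma weight_pos (hq0 : 0 < q) (hq1 : q < 1) (hα : ∀ i, 0 < α i) (hαq : ∀ i, α i * q < 1)
    (N : ℕ) (x : Fin h → ℕ) : 0 < weight q α N x := by
  refine mul_pos (pow_pos hq0 _) (prod_pos fun i _ => mul_pos
    (div_pos (qPoch_pos fun j _ => ?_) (qPoch_self_pos hq0 hq1 _))
    (zpow_pos (mul_pos (hα i) hq0) _))
  calc q * α i * q ^ j ≤ q * α i * 1 := by
        gcongr
        · exact (mul_pos hq0 (hα i)).le
        · exact pow_le_one₀ hq0.le hq1.le
    _ < 1 := by linarith [hαq i]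

lemma neg_one_pow_mul_weight_pos (hq0 : 0 < q) (hq1 : q < 1) {N : ℕ}
    (hα : ∀ i, 1 < α i * q ^ N) {x : Fin h → ℕ} (hx : ∑ i, x i = N) :
    0 < (-1) ^ N * weight q α N x := by
  have hfactor : ∀ i, 0 < (-1) ^ x i * weightFactor q α N x i := by
    intro i
    have hαi : 0 < α i := pos_of_mul_pos_left ((zero_lt_one).trans (hα i)) (pow_pos hq0 N).le
    have hxi : x i ≤ N := hx ▸ single_le_sum (fun _ _ => Nat.zero_le _) (mem_univ i)
    have hP : 0 < (-1) ^ x i * qPoch q (q * α i) (x i) := neg_one_pow_mul_qPoch_pos fun j hj =>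
      calc 1 < α i * q ^ N := hα i
        _ ≤ α i * q ^ (j + 1) :=
          mul_le_mul_of_nonneg_left (pow_le_pow_of_le_one hq0.le hq1.le (by omega)) hαi.le
        _ = q * α i * q ^ j := by ring
    rw [weightFactor, ← mul_assoc, ← mul_div_assoc]
    exact mul_pos (div_pos hP (qPoch_self_pos hq0 hq1 _)) (zpow_pos (mul_pos hαi hq0) _)
  have hsign : (-1) ^ N * weight q α N x
      = q ^ (N * (N + 1) / 2) * ∏ i, (-1) ^ x i * weightFactor q α N x i := by
    rw [weight, prod_mul_distrib, prod_pow_eq_pow_sum, hx]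
    ring
  rw [hsign]
  exact mul_pos (pow_pos hq0 _) (prod_pos fun i _ => hfactor i)

lemma eq_zero_of_Lop_eq_zero_of_fin_one {α : Fin 1 → ℝ} {n : ℕ} (hn : 1 ≤ n)
    (hα : α 0 * q ^ n ≠ 1) {f : (Fin 1 → ℕ) → ℂ}
    (hker : ∀ y : Fin 1 → ℕ, (∑ i, y i) + 1 = n → Lop q α f y = 0) {x : Fin 1 → ℕ}
    (hx : ∑ i, x i = n) : f x = 0 := by
  have hupd : Function.update (fun _ : Fin 1 => n - 1) 0 n = x := by
    funext j
    rw [Subsingleton.elim j 0]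
    simp only [Fin.sum_univ_one] at hx
    simp [hx]
  have hy := hker (fun _ => n - 1) (by simp; omega)
  simp only [Lop, Fin.sum_univ_one, Fin.val_zero, Xlt_zero, Apar_zero, Nat.sub_add_cancel hn,
    hupd, Complex.ofReal_one, add_zero, pow_zero, one_mul] at hy
  exact (mul_eq_zero.mp hy).resolve_left (sub_ne_zero.mpr (by exact_mod_cast hα))

lemma eq_zero_of_RopIter_eq_zero_of_sign (hq0 : 0 < q) (hq1 : q < 1) (hα : ∀ i, 0 < α i) {n k : ℕ}
    {f : (Fin h → ℕ) → ℂ} (hker : ∀ x : Fin h → ℕ, (∑ i, x i) + 1 = n → Lop q α f x = 0)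
    (hcoeff : ∀ j < k, Apar α h * q ^ (2 * n + h) * q ^ j ≠ 1) {s : ℝ}
    (hs : ∀ x ∈ Nat.antidiagonalTuple h n, 0 < s * weight q α n x)
    (hvan : ∀ x : Fin h → ℕ, ∑ i, x i = n + k → RopIter q n k f x = 0)
    {x : Fin h → ℕ} (hx : ∑ i, x i = n) : f x = 0 := by
  have hzero : innerV q α (n + k) (RopIter q n k f) (RopIter q n k f) = 0 := by
    rw [innerV_eq_sum_weight]
    exact sum_eq_zero fun y hy => by simp [hvan y (Nat.mem_antidiagonalTuple.mp hy)]
  have hprod : ∏ j ∈ range k, -lowerRaiseCoeff q α n (j + 1) ≠ 0 := by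
    refine prod_ne_zero_iff.mpr fun j hj => ?_
    rw [neg_lowerRaiseCoeff_succ hq0]
    exact mul_ne_zero (mul_ne_zero (inv_ne_zero (pow_ne_zero _ hq0.ne'))
      (sub_ne_zero.mpr (pow_lt_one₀ hq0.le hq1 (Nat.succ_ne_zero j)).ne'))
      (sub_ne_zero.mpr (hcoeff j (mem_range.mp hj)).symm)
  rw [innerV_RopIter_self hq0 hq1 hα hker, mul_eq_zero, Complex.ofReal_eq_zero] at hzero
  exact eq_zero_of_innerV_self_eq_zero hs (hzero.resolve_left hprod) hx

lemma Apar_mul_pow_lt_one (hq0 : 0 < q) (hq1 : q < 1) (hh : 1 ≤ h) (hα : ∀ i, 0 < α i)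
    (hαq : ∀ i, α i * q < 1) (m j : ℕ) : Apar α h * q ^ (m + h) * q ^ j < 1 := by
  have : Nonempty (Fin h) := ⟨⟨0, hh⟩⟩
  have hprod : ∏ i, α i * q < 1 := by
    calc ∏ i, α i * q < ∏ _i : Fin h, (1 : ℝ) :=
          prod_lt_prod_of_nonempty (fun i _ => mul_pos (hα i) hq0) (fun i _ => hαq i) univ_nonempty
      _ = 1 := prod_const_one
  have hrw : Apar α h * q ^ (m + h) * q ^ j = (∏ i, α i * q) * q ^ (m + j) := by
    rw [Apar_of_le α le_rfl, prod_mul_distrib, prod_const, card_univ, Fintype.card_fin]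
    ring
  rw [hrw]
  calc (∏ i, α i * q) * q ^ (m + j) ≤ (∏ i, α i * q) * 1 := by
        gcongr
        · exact (prod_pos fun i _ => mul_pos (hα i) hq0).le
        · exact pow_le_one₀ hq0.le hq1.le
    _ < 1 := by linarith

lemma one_lt_Apar_mul_pow (hq0 : 0 < q) (hq1 : q < 1) (hh : 1 ≤ h) {N : ℕ}
    (hα : ∀ i, 1 < α i * q ^ N) {m : ℕ} (hm : m ≤ N * h) : 1 < Apar α h * q ^ m := by
  have : Nonempty (Fin h) := ⟨⟨0, hh⟩⟩
  have hprod : 1 < Apar α h * q ^ (N * h) := by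
    calc (1 : ℝ) = ∏ _i : Fin h, (1 : ℝ) := prod_const_one.symm
      _ < ∏ i, α i * q ^ N :=
          prod_lt_prod_of_nonempty (fun _ _ => one_pos) (fun i _ => hα i) univ_nonempty
      _ = Apar α h * q ^ (N * h) := by
          rw [Apar_of_le α le_rfl, prod_mul_distrib, prod_const, card_univ, Fintype.card_fin,
            pow_mul]
  have hApos : 0 < Apar α h := pos_of_mul_pos_left (one_pos.trans hprod) (pow_pos hq0 _).le
  calc 1 < Apar α h * q ^ (N * h) := hprod
    _ ≤ Apar α h * q ^ m :=
        mul_le_mul_of_nonneg_left (pow_le_pow_of_le_one hq0.le hq1.le hm) hApos.le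

lemma eq_zero_of_RopIter_eq_zero_of_mul_lt_one (hq0 : 0 < q) (hq1 : q < 1) (hh : 1 ≤ h)
    (hα : ∀ i, 0 < α i) (hαq : ∀ i, α i * q < 1) {n k : ℕ} {f : (Fin h → ℕ) → ℂ}
    (hker : ∀ x : Fin h → ℕ, (∑ i, x i) + 1 = n → Lop q α f x = 0)
    (hvan : ∀ x : Fin h → ℕ, ∑ i, x i = n + k → RopIter q n k f x = 0)
    {x : Fin h → ℕ} (hx : ∑ i, x i = n) : f x = 0 :=
  eq_zero_of_RopIter_eq_zero_of_sign hq0 hq1 hα hker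
    (fun j _ => (Apar_mul_pow_lt_one hq0 hq1 hh hα hαq _ j).ne) (s := 1)
    (fun y _ => by simpa using weight_pos hq0 hq1 hα hαq n y) hvan hx

lemma eq_zero_of_RopIter_eq_zero_of_one_lt_mul (hq0 : 0 < q) (hq1 : q < 1) (hh : 1 ≤ h)
    (hα : ∀ i, 0 < α i) {n k : ℕ} (hαq : ∀ i, 1 < α i * q ^ (n + k)) {f : (Fin h → ℕ) → ℂ}
    (hker : ∀ x : Fin h → ℕ, (∑ i, x i) + 1 = n → Lop q α f x = 0)
    (hvan : ∀ x : Fin h → ℕ, ∑ i, x i = n + k → RopIter q n k f x = 0)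
    {x : Fin h → ℕ} (hx : ∑ i, x i = n) : f x = 0 := by
  have hαn (i : Fin h) : 1 < α i * q ^ n := (hαq i).trans_le <|
    mul_le_mul_of_nonneg_left (pow_le_pow_of_le_one hq0.le hq1.le (by omega)) (hα i).le
  -- For `h = 1` the constant `(A_h q^{2n+h}; q)_k` may vanish, but then `Ker L_n = 0`.
  by_cases hcrit : h = 1 ∧ 1 ≤ n
  · obtain ⟨rfl, hn⟩ := hcrit
    exact eq_zero_of_Lop_eq_zero_of_fin_one hn (hαn 0).ne' hker hx
  refine eq_zero_of_RopIter_eq_zero_of_sign hq0 hq1 hα hker (fun j hj => ?_) (s := (-1) ^ n)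
    (fun y hy => neg_one_pow_mul_weight_pos hq0 hq1 hαn (Nat.mem_antidiagonalTuple.mp hy)) hvan hx
  have hexp : 2 * n + h + j ≤ (n + k) * h := by
    rcases Nat.lt_or_ge h 2 with h1 | h2
    · obtain rfl : n = 0 := by omega
      nlinarith
    · nlinarith
  rw [mul_assoc, ← pow_add]
  exact (one_lt_Apar_mul_pow hq0 hq1 hh hαq hexp).ne'

end Injectivity

theorem stmt6 (q : ℝ) (hq0 : 0 < q) (hq1 : q < 1) (h : ℕ) (hh : 1 ≤ h)
    (α : Fin h → ℝ) (hα : ∀ i, 0 < α i) (n N : ℕ) (hnN : n ≤ N) :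
    (∀ f : (Fin h → ℕ) → ℂ,
      (n = 0 ∨ ∀ x : Fin h → ℕ, (∑ i, x i) + 1 = n → Lop q α f x = 0) →
      innerV q α N (RopIter q n (N - n) f) (RopIter q n (N - n) f) =
        (q : ℂ) ^ (-(((N - n) * (N + n + 1) / 2 : ℕ) : ℤ)) *
          ((qPoch q q (N - n) : ℝ) : ℂ) *
          ((qPoch q (Apar α h * q ^ (2 * n + h)) (N - n) : ℝ) : ℂ) * innerV q α n f f) ∧
    (((∀ i, α i < q⁻¹) ∨ (∀ i, (q : ℝ) ^ (-(N : ℤ)) < α i)) →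
      ∀ f : (Fin h → ℕ) → ℂ,
        (n = 0 ∨ ∀ x : Fin h → ℕ, (∑ i, x i) + 1 = n → Lop q α f x = 0) →
        (∀ x : Fin h → ℕ, (∑ i, x i) = N → RopIter q n (N - n) f x = 0) →
        ∀ x : Fin h → ℕ, (∑ i, x i) = n → f x = 0) := by
  obtain ⟨k, rfl⟩ := Nat.exists_eq_add_of_le hnN
  have hker (f : (Fin h → ℕ) → ℂ)
      (hf : n = 0 ∨ ∀ x : Fin h → ℕ, (∑ i, x i) + 1 = n → Lop q α f x = 0)
      (x : Fin h → ℕ) (hx : (∑ i, x i) + 1 = n) : Lop q α f x = 0 :=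
    hf.elim (fun hn => by omega) (· x hx)
  rw [Nat.add_sub_cancel_left, show n + k + n + 1 = 2 * n + k + 1 by ring]
  refine ⟨fun f hf => ?_, ?_⟩
  · rw [innerV_RopIter_self hq0 hq1 hα (hker f hf), prod_neg_lowerRaiseCoeff hq0]
    push_cast
    rfl
  rintro (hαq | hαq) f hf hvan x hx
  · have hαq (i : Fin h) : α i * q < 1 := by
      simpa [hq0.ne'] using mul_lt_mul_of_pos_right (hαq i) hq0
    exact eq_zero_of_RopIter_eq_zero_of_mul_lt_one hq0 hq1 hh hα hαq (hker f hf) hvan hx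
  · have hαq (i : Fin h) : 1 < α i * q ^ (n + k) := by
      rw [zpow_neg, zpow_natCast] at hαq
      exact (inv_lt_iff_one_lt_mul₀ (pow_pos hq0 _)).mp (hαq i)
    exact eq_zero_of_RopIter_eq_zero_of_one_lt_mul hq0 hq1 hh hα hαq (hker f hf) hvan hx
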